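/- arXiv:1212.1977 — 2 statements merged into one kernel-verified Lean document; each statement's English description precedes it below -/
import Mathlib

section
/- Let G be a connected graph on n vertices with diameter D ≥ 1, and set s = 1 + Σ_{i=D}^{n−1} (n−i)·⌊i/D⌋. Then for every t ≥ s, the t-fold Cartesian power G^t does not admit a consecutive radio labeling; i.e., rn(G^t) > n^t. -/
/-!
Let `U₀, …, Uₙ` be the vertices with labels `1, …, n + 1`. If `Uᵢ` and `Uⱼ` (`i < j`) agree in
a set `A` of coordinates, their distance is at most `(t - |A|) D`, so the radio condition forces
`|A| D < j - i`, i.e. `|A| ≤ ⌊(j - i - 1) / D⌋`. As `G` has only `n` vertices, for every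
coordinate some pair among the `n + 1` vertices agrees there, hence
`t ≤ ∑_{i < j ≤ n} ⌊(j - i - 1) / D⌋ = ∑_{k < n} (n - k) ⌊k / D⌋`, contradicting the choice
of `t`.
-/

/-- The `t`-fold Cartesian product power of a graph `G`. -/
def SimpleGraph.cartPow {V : Type*} (G : SimpleGraph V) (t : ℕ) :
    SimpleGraph (Fin t → V) where
  Adj x y := ∃ a, G.Adj (x a) (y a) ∧ ∀ k, k ≠ a → x k = y k
  symm := by
    constructor
    rintro x y ⟨a, h, hk⟩
    exact ⟨a, h.symm, fun k hk' => (hk k hk').symm⟩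
  loopless := by
    constructor
    rintro x ⟨a, h, -⟩
    exact G.loopless.irrefl _ h

open Finset

namespace SimpleGraph

variable {V W : Type*} {G : SimpleGraph V}

theorem edist_map_le {G' : SimpleGraph W} (f : G →g G') (u v : V) :
    G'.edist (f u) (f v) ≤ G.edist u v := by
  by_cases h : G.edist u v = ⊤
  · simp [h]
  obtain ⟨p, hp⟩ := exists_walk_of_edist_ne_top h
  calc G'.edist (f u) (f v) ≤ (p.map f).length := edist_le _
    _ = G.edist u v := by rw [Walk.length_map, hp]

theorem Connected.diam_lt_card [Fintype V] (hG : G.Connected) : G.diam < Fintype.card V := by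
  have := hG.nonempty
  obtain ⟨u, v, huv⟩ := G.exists_dist_eq_diam
  obtain ⟨p, hp, hlen⟩ := hG.exists_path_of_dist u v
  exact huv ▸ hlen ▸ hp.length_lt

variable {t : ℕ}

def cartPowFiber (G : SimpleGraph V) (x : Fin t → V) (a : Fin t) : G →g G.cartPow t where
  toFun v := Function.update x a v
  map_rel' h := ⟨a, by simpa using h, fun k hk => by simp [Function.update_of_ne hk]⟩

@[simp]
theorem cartPowFiber_apply (x : Fin t → V) (a : Fin t) (v : V) :
    G.cartPowFiber x a v = Function.update x a v :=
  rfl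

theorem edist_cartPow_le_sum (x y : Fin t → V) :
    (G.cartPow t).edist x y ≤ ∑ a, G.edist (x a) (y a) := by
  suffices h : ∀ s : Finset (Fin t), ∀ x y : Fin t → V, (∀ a ∉ s, x a = y a) →
      (G.cartPow t).edist x y ≤ ∑ a ∈ s, G.edist (x a) (y a) from
    h univ x y (by simp)
  intro s
  induction s using Finset.induction_on with
  | empty =>
    intro x y hxy
    simp [funext fun a => hxy a (notMem_empty a)]
  | @insert a s ha ih =>
    intro x y hxy
    set z := Function.update x a (y a)
    have hxz : (G.cartPow t).edist x z ≤ G.edist (x a) (y a) := by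
      simpa [z] using edist_map_le (G.cartPowFiber x a) (x a) (y a)
    have hzy : (G.cartPow t).edist z y ≤ ∑ b ∈ s, G.edist (x b) (y b) := by
      refine (ih z y fun b hb => ?_).trans_eq (sum_congr rfl fun b hb => ?_)
      · by_cases hba : b = a
        · simp [z, hba]
        · simpa [z, hba] using hxy b (by simp [hb, hba])
      · simp only [z, Function.update_of_ne (ne_of_mem_of_not_mem hb ha)]
    rw [sum_insert ha]
    exact G.cartPow t |>.edist_triangle.trans (add_le_add hxz hzy)

theorem card_eq_mul_diam_add_dist_cartPow_le [DecidableEq V] (h : G.ediam ≠ ⊤)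
    (x y : Fin t → V) : #{a | x a = y a} * G.diam + (G.cartPow t).dist x y ≤ t * G.diam := by
  have hdist : (G.cartPow t).dist x y ≤ #{a | ¬x a = y a} * G.diam := by
    have : (G.cartPow t).edist x y ≤ (#{a | ¬x a = y a} * G.diam : ℕ) := by
      refine (edist_cartPow_le_sum x y).trans ?_
      rw [← sum_filter_of_ne (p := fun a => ¬x a = y a) fun a _ h => by simpa using h]
      have hle : ∀ a, G.edist (x a) (y a) ≤ G.diam := fun a =>
        edist_le_ediam.trans_eq (ENat.natCast_toNat h).symm
      simpa using sum_le_card_nsmul _ _ _ fun a _ => hle a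
    exact ENat.toNat_le_of_le_natCast this
  calc #{a | x a = y a} * G.diam + (G.cartPow t).dist x y
      ≤ #{a | x a = y a} * G.diam + #{a | ¬x a = y a} * G.diam := by gcongr
    _ = t * G.diam := by
      rw [← add_mul, card_filter_add_card_filter_not, card_univ, Fintype.card_fin]

end SimpleGraph

/-- A pair `i < j ≤ n` of indices appears as `(i, i + k + 1)` with gap `k = j - i - 1`. -/
theorem card_le_sum_card_eq_of_card_le {ι V : Type*} [Fintype ι] [Fintype V] [DecidableEq V]
    {n : ℕ} (hV : Fintype.card V ≤ n) (U : ℕ → ι → V) :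
    Fintype.card ι ≤ ∑ k ∈ range n, ∑ i ∈ range (n - k), #{a | U i a = U (i + k + 1) a} := by
  have hrepeat : ∀ a, ∃ k < n, ∃ i < n - k, U i a = U (i + k + 1) a := by
    intro a
    obtain ⟨i, hi, j, hj, hij, heq⟩ := exists_ne_map_eq_of_card_lt_of_maps_to
      (s := range (n + 1)) (t := univ) (f := fun i => U i a)
      (by simpa using hV.trans_lt n.lt_succ_self) (fun _ _ => mem_coe.2 (mem_univ _))
    simp only [mem_range] at hi hj
    rcases hij.lt_or_gt with h | h
    · refine ⟨j - i - 1, by omega, i, by omega, ?_⟩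
      rwa [show i + (j - i - 1) + 1 = j by omega]
    · refine ⟨i - j - 1, by omega, j, by omega, ?_⟩
      rw [show j + (i - j - 1) + 1 = i by omega, heq]
  calc Fintype.card ι = ∑ _a : ι, 1 := by simp
    _ ≤ ∑ a, ∑ k ∈ range n, ∑ i ∈ range (n - k),
          if U i a = U (i + k + 1) a then 1 else 0 := by
      refine sum_le_sum fun a _ => ?_
      obtain ⟨k, hk, i, hi, heq⟩ := hrepeat a
      refine le_trans ?_ (single_le_sum (fun _ _ => Nat.zero_le _) (mem_range.2 hk))
      refine le_trans ?_ (single_le_sum (fun _ _ => Nat.zero_le _) (mem_range.2 hi))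
      simp [heq]
    _ = _ := by
      rw [sum_comm]
      refine sum_congr rfl fun k _ => ?_
      rw [sum_comm]
      simp only [card_filter]

theorem one_le_sum_Icc_sub_mul_div {n D : ℕ} (hD : 0 < D) (hDn : D < n) :
    1 ≤ ∑ i ∈ Icc D (n - 1), (n - i) * (i / D) := by
  have := single_le_sum (f := fun i => (n - i) * (i / D)) (fun _ _ => Nat.zero_le _)
    (mem_Icc.2 ⟨le_rfl, Nat.le_sub_one_of_lt hDn⟩)
  simp only [Nat.div_self hD, mul_one] at this
  omega

theorem sum_range_sub_mul_div_eq_sum_Icc (n D : ℕ) :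
    ∑ k ∈ range n, (n - k) * (k / D) = ∑ k ∈ Icc D (n - 1), (n - k) * (k / D) := by
  rcases n with _ | n
  · simp
  refine (sum_subset (fun k hk => ?_) fun k hk hk' => ?_).symm
  · simp only [mem_Icc, mem_range] at hk ⊢; omega
  · simp only [mem_Icc, mem_range, not_and, not_le] at hk hk'
    simp [Nat.div_eq_of_lt (by omega : k < D)]

theorem cartPow_no_consecutive_radio_labeling {V : Type*} [Fintype V] {n : ℕ}
    (G : SimpleGraph V) (hG : G.Connected) (hcard : Fintype.card V = n)
    (hD : 1 ≤ G.diam) {t : ℕ}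
    (ht : 1 + ∑ i ∈ Finset.Icc G.diam (n - 1), (n - i) * (i / G.diam) ≤ t) :
    ¬∃ f : (Fin t → V) ≃ Fin (n ^ t),
        ∀ u v : Fin t → V, u ≠ v →
          ((t * G.diam : ℕ) : ℤ) + 1 - (G.cartPow t).dist u v ≤
            |(((f u : ℕ) + 1 : ℕ) : ℤ) - (((f v : ℕ) + 1 : ℕ) : ℤ)| := by
  classical
  rintro ⟨f, hf⟩
  have hDn : G.diam < n := hcard ▸ hG.diam_lt_card
  have hdiam : G.ediam ≠ ⊤ := SimpleGraph.ediam_ne_top_of_diam_ne_zero (by omega)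
  have ht2 : 2 ≤ t := by linarith [one_le_sum_Icc_sub_mul_div hD hDn]
  have hnt : n < n ^ t := calc
    n < n ^ 2 := by nlinarith
    _ ≤ n ^ t := Nat.pow_le_pow_right (by omega) ht2
  set U : ℕ → Fin t → V := fun i => f.symm ⟨i % n ^ t, Nat.mod_lt _ (by omega)⟩
  have hU : ∀ i ≤ n, (f (U i) : ℕ) = i := fun i hi => by
    simp [U, Nat.mod_eq_of_lt (hi.trans_lt hnt)]
  have hgap : ∀ k ∈ range n, ∀ i ∈ range (n - k),
      #{a | U i a = U (i + k + 1) a} ≤ k / G.diam := by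
    intro k hk i hi
    rw [mem_range] at hk hi
    have hne : U i ≠ U (i + k + 1) := fun h => by
      have := congrArg (fun w => (f w : ℕ)) h
      simp only [hU i (by omega), hU (i + k + 1) (by omega)] at this
      omega
    have hradio := hf _ _ hne
    rw [hU i (by omega), hU _ (by omega), abs_of_nonpos (by push_cast; omega)] at hradio
    push_cast at hradio
    have := G.card_eq_mul_diam_add_dist_cartPow_le hdiam (U i) (U (i + k + 1))
    rw [Nat.le_div_iff_mul_le hD]
    omega
  have hcount := (card_le_sum_card_eq_of_card_le hcard.le U).trans
    (sum_le_sum fun k hk => sum_le_sum (hgap k hk))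
  simp only [Fintype.card_fin, sum_const, card_range, smul_eq_mul,
    sum_range_sub_mul_div_eq_sum_Icc] at hcount
  omega
end

section
/- For every integer n ≥ 2 and every integer t ≥ 1 + n(n²−1)/6, the graph K_n^t does not admit a consecutive radio labeling; equivalently, rn(K_n^t) > n^t. -/
/-!
Call the vertices `x₀, x₁, …` in the order of their labels. The radio condition says that
`xᵢ` and `xⱼ` (`i < j`) agree in at most `j - i - 1` coordinates, since `dist ≤ hammingDist`.
Among `x₀, …, xₙ` each coordinate takes only `n` values, so every coordinate contributes an
agreeing pair: hence `t ≤ ∑_{i < j ≤ n} (j - i - 1) = (n + 1).choose 3 = n (n² - 1) / 6`.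
-/

open Finset

section Hamming

variable {ι β : Type*} [Fintype ι] [DecidableEq β]

theorem card_filter_eq_add_hammingDist (x y : ι → β) :
    #{i | x i = y i} + hammingDist x y = Fintype.card ι :=
  card_filter_add_card_filter_not _

variable [DecidableEq ι]

theorem hammingDist_update_add_one {x z : ι → β} {a : ι} (ha : x a ≠ z a) :
    hammingDist (Function.update x a (z a)) z + 1 = hammingDist x z := by
  have hfilter : ({i | Function.update x a (z a) i ≠ z i} : Finset ι)
      = ({i | x i ≠ z i} : Finset ι).erase a := by
    ext i
    by_cases hi : i = a
    · subst hi; simp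
    · simp [hi]
  rw [hammingDist, hfilter, card_erase_add_one (by simpa using ha), hammingDist]

end Hamming

namespace SimpleGraph

/-- `d` plays the role of the diameter of `G`. -/
def IsRadioLabeling {V : Type*} (G : SimpleGraph V) (d : ℕ) (f : V → ℕ) : Prop :=
  ∀ x y, x ≠ y → (d : ℤ) + 1 - G.dist x y ≤ |(f x : ℤ) - f y|

theorem IsRadioLabeling.add_one_le_dist_add {V : Type*} {G : SimpleGraph V} {d : ℕ}
    {f : V → ℕ} (hf : G.IsRadioLabeling d f) {u v : V} (huv : f u < f v) :
    d + 1 ≤ G.dist u v + (f v - f u) := by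
  have h := hf u v (by rintro rfl; exact huv.false)
  rw [abs_sub_comm, abs_of_nonneg (by omega)] at h
  omega

variable {V : Type*} {t : ℕ}

theorem cartPow_top_adj_update (x : Fin t → V) {a : Fin t} {v : V} (h : x a ≠ v) :
    ((⊤ : SimpleGraph V).cartPow t).Adj x (Function.update x a v) :=
  ⟨a, by simpa using h, fun k hk => (Function.update_of_ne hk v x).symm⟩

variable [DecidableEq V]

theorem exists_walk_cartPow_top_length_le_hammingDist (x z : Fin t → V) :
    ∃ w : ((⊤ : SimpleGraph V).cartPow t).Walk x z, w.length ≤ hammingDist x z := by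
  induction h : hammingDist x z generalizing x with
  | zero =>
    obtain rfl := hammingDist_eq_zero.mp h
    exact ⟨Walk.nil, by simp⟩
  | succ k ih =>
    obtain ⟨a, ha⟩ := Function.ne_iff.mp (hammingDist_pos.mp (by omega : 0 < hammingDist x z))
    have hcloser := hammingDist_update_add_one ha
    obtain ⟨w, hw⟩ := ih (Function.update x a (z a)) (by omega)
    exact ⟨.cons (cartPow_top_adj_update x ha) w, by simpa using hw⟩

theorem cartPow_top_dist_le_hammingDist (x z : Fin t → V) :
    ((⊤ : SimpleGraph V).cartPow t).dist x z ≤ hammingDist x z :=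
  let ⟨w, hw⟩ := exists_walk_cartPow_top_length_le_hammingDist x z
  (dist_le w).trans hw

theorem IsRadioLabeling.cartPow_top_add_one_le_hammingDist_add {f : (Fin t → V) → ℕ}
    (hf : ((⊤ : SimpleGraph V).cartPow t).IsRadioLabeling t f) {u v : Fin t → V}
    (huv : f u < f v) : t + 1 ≤ hammingDist u v + (f v - f u) :=
  (hf.add_one_le_dist_add huv).trans (Nat.add_le_add_right (cartPow_top_dist_le_hammingDist u v) _)

end SimpleGraph

theorem sum_range_sub_sub_one (j : ℕ) : ∑ i ∈ range j, (j - i - 1) = j.choose 2 := by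
  rw [Nat.choose_two_right, ← sum_range_id, ← sum_range_reflect (fun i => i) j]
  exact sum_congr rfl fun i _ => by omega

theorem sum_range_sum_range_sub_sub_one (m : ℕ) :
    ∑ j ∈ range m, ∑ i ∈ range j, (j - i - 1) = m.choose 3 := by
  induction m with
  | zero => rfl
  | succ m ih => rw [sum_range_succ, ih, sum_range_sub_sub_one, Nat.choose_succ_succ' m 2, add_comm]

theorem succ_choose_three (n : ℕ) : (n + 1).choose 3 = n * (n ^ 2 - 1) / 6 := by
  have hdesc : (n + 1).descFactorial 3 = n * (n ^ 2 - 1) := by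
    rcases n with _ | k
    · rfl
    · rw [show (k + 1) ^ 2 - 1 = k * (k + 2) from Nat.sub_eq_of_eq_add (by ring)]
      simp [Nat.descFactorial_succ]
      ring
  have h := Nat.descFactorial_eq_factorial_mul_choose (n + 1) 3
  rw [hdesc, show Nat.factorial 3 = 6 from rfl] at h
  omega

theorem exists_lt_lt_map_eq_of_card_lt {α : Type*} [Fintype α] {m : ℕ}
    (hm : Fintype.card α < m) (y : ℕ → α) : ∃ j < m, ∃ i < j, y i = y j := by
  obtain ⟨i, hi, j, hj, hij, h⟩ := exists_ne_map_eq_of_card_lt_of_maps_to (s := range m)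
    (t := univ) (by simpa using hm) (f := y) (fun _ _ => mem_coe.mpr (mem_univ _))
  rw [mem_range] at hi hj
  rcases hij.lt_or_gt with hlt | hlt
  · exact ⟨j, hj, i, hlt, h⟩
  · exact ⟨i, hi, j, hlt, h.symm⟩

theorem card_le_choose_three_of_add_one_le_hammingDist_add {ι α : Type*} [Fintype ι]
    [Fintype α] [DecidableEq α] {m : ℕ} (hm : Fintype.card α < m) (x : ℕ → ι → α)
    (hx : ∀ j < m, ∀ i < j, Fintype.card ι + 1 ≤ hammingDist (x i) (x j) + (j - i)) :
    Fintype.card ι ≤ m.choose 3 := by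
  have hcoord (a : ι) :
      1 ≤ ∑ j ∈ range m, ∑ i ∈ range j, if x i a = x j a then 1 else 0 := by
    obtain ⟨j, hj, i, hij, h⟩ := exists_lt_lt_map_eq_of_card_lt hm (fun k => x k a)
    calc 1 = if x i a = x j a then 1 else 0 := (if_pos h).symm
      _ ≤ ∑ i ∈ range j, if x i a = x j a then 1 else 0 :=
        single_le_sum (f := fun i => if x i a = x j a then 1 else 0) (by simp) (mem_range.mpr hij)
      _ ≤ _ := single_le_sum (f := fun j => ∑ i ∈ range j, if x i a = x j a then 1 else 0)
        (by simp) (mem_range.mpr hj)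
  calc Fintype.card ι = ∑ _a : ι, 1 := by simp
    _ ≤ ∑ a : ι, ∑ j ∈ range m, ∑ i ∈ range j, if x i a = x j a then 1 else 0 :=
      sum_le_sum fun a _ => hcoord a
    _ = ∑ j ∈ range m, ∑ i ∈ range j, #{a | x i a = x j a} := by
      rw [sum_comm]
      refine sum_congr rfl fun j _ => ?_
      rw [sum_comm]
      simp only [card_filter]
    _ ≤ ∑ j ∈ range m, ∑ i ∈ range j, (j - i - 1) := by
      gcongr with j hj i hi
      have := hx j (mem_range.mp hj) i (mem_range.mp hi)
      have := card_filter_eq_add_hammingDist (x i) (x j)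
      omega
    _ = m.choose 3 := sum_range_sum_range_sub_sub_one m

theorem cartPow_complete_no_consecutive_radio_labeling {n t : ℕ} (hn : 2 ≤ n)
    (ht : 1 + n * (n ^ 2 - 1) / 6 ≤ t) :
    ¬∃ f : (Fin t → Fin n) ≃ Fin (n ^ t),
        ∀ x y : Fin t → Fin n, x ≠ y →
          (t : ℤ) + 1 - ((⊤ : SimpleGraph (Fin n)).cartPow t).dist x y ≤
            |(((f x : ℕ) + 1 : ℕ) : ℤ) - (((f y : ℕ) + 1 : ℕ) : ℤ)| := by
  rintro ⟨f, hf⟩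
  have hradio : ((⊤ : SimpleGraph (Fin n)).cartPow t).IsRadioLabeling t (fun x => f x + 1) := hf
  rw [← succ_choose_three] at ht
  have : NeZero n := ⟨by omega⟩
  have hwindow : n < n ^ t := by
    have := Nat.choose_pos (show 3 ≤ n + 1 by omega)
    simpa using Nat.pow_lt_pow_right (a := n) (by omega) (show 1 < t by omega)
  set x : ℕ → Fin t → Fin n := fun k => f.symm (Fin.ofNat (n ^ t) k)
  have hfx : ∀ k < n ^ t, (f (x k) : ℕ) = k := fun k hk => by simp [x, Nat.mod_eq_of_lt hk]
  have key : t ≤ (n + 1).choose 3 := by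
    simpa using card_le_choose_three_of_add_one_le_hammingDist_add (m := n + 1) (by simp) x
      fun j hj i hij => by
        have hlabel := hradio.cartPow_top_add_one_le_hammingDist_add (u := x i) (v := x j)
          (by simp only [hfx i (by omega), hfx j (by omega)]; omega)
        simpa [hfx i (by omega), hfx j (by omega)] using hlabel
  omega
end
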